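/- arXiv:math/9709231 — 6 statements merged into one kernel-verified Lean document; each statement's English description precedes it below -/
import Mathlib

section
/- For every infinite cardinal σ there exists a function h' : [σ⁺]² → σ such that for every subset X of σ⁺ of cardinality σ⁺, the image of [X]² under h' is cofinal in σ (i.e., for every j < σ there exists j₁ with j < j₁ < σ and i₀, i₁ ∈ X distinct with h'({i₀,i₁}) = j₁). -/
/-!
Fix, for every `β < σ⁺`, an injection `F β` of the initial segment below `β` (which has size
at most `σ`) into `σ`, and colour a pair `{i, j}` by `F (max i j) (min i j)`. A set `X` of size
`σ⁺` contains a subset `Y` of size `σ`, which is bounded in `σ⁺` by regularity, so some `β ∈ X`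
lies above all of `Y`. Then `F β` maps `Y` injectively to `σ`-many ordinals below `σ`, and these
cannot all lie below any `j < σ`.
-/

open Cardinal Set Order

universe u

theorem exists_forall_lt_of_mk_lt_cof {α : Type u} [LinearOrder α] {s : Set α}
    (hs : #s < cof α) : ∃ b, ∀ y ∈ s, y < b :=
  not_isCofinal_iff.1 fun hcof => (cof_le hcof).not_gt hs

theorem isCofinal_of_le_mk {c : Cardinal.{u}} {s : Set c.ord.ToType} (hs : c ≤ #s) :
    IsCofinal s := by
  intro b
  by_contra! hlt
  exact (hs.trans (mk_le_mk_of_subset (t := Iio b) hlt)).not_gt (by simpa using mk_Iio_lt b)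

theorem mk_Iio_le_of_toType_succ_ord {c : Cardinal.{u}} (b : (succ c).ord.ToType) :
    #(Iio b) ≤ c :=
  lt_succ_iff.1 (by simpa using mk_Iio_lt b)

theorem exists_injOn_lt_ord {α : Type u} {s : Set α} {c : Cardinal.{u}} (hc : c ≠ 0)
    (hs : #s ≤ c) : ∃ f : α → Ordinal.{u}, (∀ x, f x < c.ord) ∧ InjOn f s := by
  obtain ⟨e⟩ : Nonempty (s ↪ c.ord.ToType) := by rwa [← le_def, mk_ord_toType]
  classical
  refine ⟨fun x => if h : x ∈ s then (Ordinal.ToType.toOrd (e ⟨x, h⟩)).1 else 0, fun x => ?_, ?_⟩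
  · dsimp only
    split_ifs
    · exact (Ordinal.ToType.toOrd _).2
    · simpa [pos_iff_ne_zero] using hc
  · intro x hx y hy hxy
    simp only [dif_pos hx, dif_pos hy] at hxy
    exact congrArg Subtype.val
      (e.injective (Ordinal.ToType.mk.symm.injective (Subtype.val_injective hxy)))

theorem exists_lt_of_le_mk_of_injOn {ι : Type u} {s : Set ι} {f : ι → Ordinal.{u}}
    {c : Cardinal.{u}} (hc : ℵ₀ ≤ c) (hs : c ≤ #s) (hf : InjOn f s) {j : Ordinal.{u}}
    (hj : j < c.ord) : ∃ x ∈ s, j < f x := by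
  by_contra! hle
  have hmaps : f '' s ⊆ Iio (j + 1) := by
    rintro _ ⟨x, hx, rfl⟩
    exact lt_add_one_iff.2 (hle x hx)
  have hbound : #s ≤ (j + 1).card := by
    rw [← lift_le.{u + 1}, ← mk_image_eq_of_injOn_lift f s hf, lift_id'.{u, u + 1},
      ← mk_Iio_ordinal]
    exact mk_le_mk_of_subset hmaps
  have hsmall : (j + 1).card < c := by
    rw [Ordinal.card_add_one]
    exact add_one_lt_of_lt hc (lt_ord.1 hj)
  exact (hs.trans hbound).not_gt hsmall

/-- For every infinite cardinal σ there is h' : [σ⁺]² → σ whose image on the pairs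
from any subset of σ⁺ of full cardinality σ⁺ is cofinal in σ. -/
theorem exists_cofinal_pair_coloring (σ : Cardinal.{0}) (hσ : ℵ₀ ≤ σ) :
    ∃ h' : (Order.succ σ).ord.ToType → (Order.succ σ).ord.ToType → Ordinal,
      (∀ i j, h' i j = h' j i) ∧
      (∀ i j, h' i j < σ.ord) ∧
      ∀ X : Set (Order.succ σ).ord.ToType, #X = Order.succ σ →
        ∀ j < σ.ord, ∃ j₁, j < j₁ ∧ j₁ < σ.ord ∧
          ∃ i₀ ∈ X, ∃ i₁ ∈ X, i₀ ≠ i₁ ∧ h' i₀ i₁ = j₁ := by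
  choose F hF_lt hF_inj using fun b : (succ σ).ord.ToType =>
    exists_injOn_lt_ord (aleph0_pos.trans_le hσ).ne' (mk_Iio_le_of_toType_succ_ord b)
  refine ⟨fun i j => F (max i j) (min i j), fun i j => by simp only [max_comm, min_comm],
    fun i j => hF_lt _ _, fun X hX j hj => ?_⟩
  obtain ⟨Y, hYX, hY⟩ := le_mk_iff_exists_subset.1 (hX ▸ le_succ σ)
  obtain ⟨b, hb⟩ := exists_forall_lt_of_mk_lt_cof (s := Y) (by
    rw [hY, Ordinal.cof_toType, (isRegular_succ hσ).cof_ord]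
    exact lt_succ σ)
  obtain ⟨β, hβX, hbβ⟩ := isCofinal_of_le_mk hX.ge b
  have hYβ : ∀ y ∈ Y, y < β := fun y hy => (hb y hy).trans_le hbβ
  obtain ⟨y, hyY, hjy⟩ := exists_lt_of_le_mk_of_injOn hσ hY.ge ((hF_inj β).mono hYβ) hj
  refine ⟨_, hjy, hF_lt _ _, y, hYX hyY, β, hβX, (hYβ y hyY).ne, ?_⟩
  simp only [max_eq_right (hYβ y hyY).le, min_eq_left (hYβ y hyY).le]
end

section
/- For every infinite cardinal σ there exists a one-to-one function h : [σ⁺]² → σ⁺ such that for every X ⊆ σ⁺ of cardinality σ⁺ and every j < σ, there exist j₁ with j < j₁ < σ and distinct i₀, i₁ ∈ X such that h({i₀,i₁}) ≡ j₁ (mod σ), i.e., h({i₀,i₁}) = σ·α + j₁ for some ordinal α. -/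
/-!
Code a pair `{a, b}` with `a < b` as `σ * g (a, b) + c a b`, where `g` injects `σ⁺ × σ⁺` into
`σ⁺` and `c · b` injects the at most `σ` predecessors of `b` into `σ`; the remainder modulo `σ` is
then `c a b`. Given `X` of size `σ⁺`, let `b` be its `σ`-th element: the `σ` elements of `X` below
`b` receive distinct colours `c a b`, while fewer than `σ` ordinals lie below `j + 1 < σ`, so
some colour exceeds `j`.
-/

open Cardinal Ordinal Set Function

universe u

namespace Cardinal

theorem exists_injective_lt_ord {β : Type u} {κ : Cardinal.{u}} (h : #β ≤ κ) :
    ∃ g : β → Ordinal.{u}, Injective g ∧ ∀ x, g x < κ.ord := by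
  obtain ⟨π⟩ : Nonempty (β ↪ κ.ord.ToType) := by rwa [← le_def, mk_ord_toType]
  exact ⟨fun x ↦ (ToType.mk.symm (π x) : Ordinal),
    Subtype.val_injective.comp (ToType.mk.symm.injective.comp π.injective),
    fun x ↦ (ToType.mk.symm (π x)).2⟩

theorem exists_lt_of_injective_of_le_mk {σ : Cardinal.{u}} (hσ : ℵ₀ ≤ σ) {β : Type u}
    {e : β → Ordinal.{u}} (he : Injective e) (hβ : σ ≤ #β) {j : Ordinal.{u}} (hj : j < σ.ord) :
    ∃ x, j < e x := by
  by_contra! hle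
  have hmk : lift.{u + 1} #β ≤ lift.{u} #(Iio (Order.succ j)) :=
    lift_mk_le_lift_mk_of_injective (f := fun x ↦ ⟨e x, Order.lt_succ_iff.2 (hle x)⟩)
      fun x y hxy ↦ he (congrArg Subtype.val hxy)
  rw [mk_Iio_ordinal, lift_lift, lift_le] at hmk
  exact (lt_ord.1 ((isSuccLimit_ord hσ).succ_lt hj)).not_ge (hβ.trans hmk)

theorem exists_mk_Iio_eq {β : Type u} [LinearOrder β] [WellFoundedLT β] {σ : Cardinal.{u}}
    (h : σ < #β) : ∃ b : β, #(Iio b) = σ := by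
  have hσ : σ.ord < typeLT β := (ord_lt_ord.2 h).trans_le (ord_card_le _)
  refine ⟨enum (α := β) (· < ·) ⟨σ.ord, hσ⟩, ?_⟩
  change (typein (α := β) (· < ·) _).card = σ
  rw [typein_enum, card_ord]

theorem exists_coloring_of_mk_Iio_le {α : Type u} [LinearOrder α] [WellFoundedLT α]
    {σ : Cardinal.{u}} (hσ : ℵ₀ ≤ σ) (hα : ∀ b : α, #(Iio b) ≤ σ) :
    ∃ c : α → α → Ordinal.{u}, (∀ a b, c a b < σ.ord) ∧
      ∀ X : Set α, σ < #X → ∀ j < σ.ord, ∃ a ∈ X, ∃ b ∈ X, a < b ∧ j < c a b := by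
  choose e he heσ using fun b ↦ exists_injective_lt_ord (hα b)
  refine ⟨fun a b ↦ if h : a < b then e b ⟨a, h⟩ else 0, fun a b ↦ ?_, fun X hX j hj ↦ ?_⟩
  · dsimp only
    split_ifs
    exacts [heσ _ _, ord_pos.2 (aleph0_pos.trans_le hσ)]
  obtain ⟨b, hb⟩ := exists_mk_Iio_eq hX
  have hinj : Injective fun a : Iio b ↦ e b ⟨a.1, a.2⟩ := fun a a' h ↦ by
    simpa only [Subtype.ext_iff] using he b h
  obtain ⟨⟨⟨a, haX⟩, hab⟩, hja⟩ := exists_lt_of_injective_of_le_mk hσ hinj hb.ge hj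
  replace hab : a < b := hab
  exact ⟨a, haX, b, b.2, hab, by simpa only [dif_pos hab] using hja⟩

end Cardinal

theorem Set.pair_min_max {α : Type*} [LinearOrder α] (a b : α) :
    ({min a b, max a b} : Set α) = {a, b} := by
  rcases le_total a b with h | h <;> simp [h, Set.pair_comm]

namespace Ordinal

variable {α : Type*} [LinearOrder α]

def pairCode (o : Ordinal.{u}) (g : α × α → Ordinal.{u}) (c : α → α → Ordinal.{u}) (a b : α) :
    Ordinal.{u} :=
  o * g (min a b, max a b) + c (min a b) (max a b)

variable {o : Ordinal.{u}} {g : α × α → Ordinal.{u}} {c : α → α → Ordinal.{u}}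

theorem pairCode_comm (a b : α) : pairCode o g c a b = pairCode o g c b a := by
  simp only [pairCode, min_comm a b, max_comm a b]

theorem pairCode_mod (hc : ∀ a b, c a b < o) (a b : α) :
    pairCode o g c a b % o = c (min a b) (max a b) := by
  rw [pairCode, mul_add_mod_self, mod_eq_of_lt (hc _ _)]

theorem pairCode_div (hc : ∀ a b, c a b < o) (a b : α) :
    pairCode o g c a b / o = g (min a b, max a b) := by
  have ho : o ≠ 0 := ne_zero_of_lt (hc a b)
  rw [pairCode, mul_add_div _ ho, div_eq_zero_of_lt (hc _ _), add_zero]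

theorem pair_eq_of_pairCode_eq (hg : Injective g) (hc : ∀ a b, c a b < o) {a b a' b' : α}
    (h : pairCode o g c a b = pairCode o g c a' b') : ({a, b} : Set α) = {a', b'} := by
  have hg' : g (min a b, max a b) = g (min a' b', max a' b') := by
    rw [← pairCode_div (g := g) hc, h, pairCode_div hc]
  obtain ⟨hmin, hmax⟩ := Prod.mk.inj (hg hg')
  rw [← Set.pair_min_max, hmin, hmax, Set.pair_min_max]

end Ordinal

/-- For every infinite cardinal σ there is a one-to-one h : [σ⁺]² → σ⁺ such that for every
X ⊆ σ⁺ of cardinality σ⁺ and every j < σ there are j₁ ∈ (j, σ) and distinct i₀, i₁ ∈ X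
with h({i₀,i₁}) ≡ j₁ (mod σ). -/
theorem exists_injective_pair_coloring_mod (σ : Cardinal.{0}) (hσ : ℵ₀ ≤ σ) :
    ∃ h : (Order.succ σ).ord.ToType → (Order.succ σ).ord.ToType → Ordinal,
      (∀ i j, h i j = h j i) ∧
      (∀ i j, h i j < (Order.succ σ).ord) ∧
      (∀ i j k l, i ≠ j → k ≠ l → h i j = h k l →
        ({i, j} : Set (Order.succ σ).ord.ToType) = {k, l}) ∧
      ∀ X : Set (Order.succ σ).ord.ToType, #X = Order.succ σ →
        ∀ j < σ.ord, ∃ j₁, j < j₁ ∧ j₁ < σ.ord ∧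
          ∃ i₀ ∈ X, ∃ i₁ ∈ X, i₀ ≠ i₁ ∧ h i₀ i₁ % σ.ord = j₁ := by
  have hκ : ℵ₀ ≤ Order.succ σ := hσ.trans (Order.le_succ σ)
  have hσκ : σ.ord < (Order.succ σ).ord := ord_lt_ord.2 (Order.lt_succ σ)
  obtain ⟨g, hg, hgκ⟩ := exists_injective_lt_ord
    (β := (Order.succ σ).ord.ToType × (Order.succ σ).ord.ToType) (κ := Order.succ σ)
    (by rw [mk_prod, Cardinal.lift_id, mk_ord_toType, mul_eq_self hκ])
  obtain ⟨c, hcσ, hc⟩ := exists_coloring_of_mk_Iio_le hσ fun b ↦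
    Order.lt_succ_iff.1 <|
      (mk_Iio_lt b (by rw [mk_ord_toType, type_toType])).trans_eq (mk_ord_toType _)
  refine ⟨pairCode σ.ord g c, pairCode_comm, fun a b ↦ ?_,
    fun _ _ _ _ _ _ ↦ pair_eq_of_pairCode_eq hg hcσ, fun X hX j hj ↦ ?_⟩
  · exact isPrincipal_add_ord hκ (isPrincipal_mul_ord hκ hσκ (hgκ _)) ((hcσ _ _).trans hσκ)
  · obtain ⟨a, ha, b, hb, hab, hjc⟩ := hc X ((Order.lt_succ σ).trans_eq hX.symm) j hj
    refine ⟨c a b, hjc, hcσ a b, a, ha, b, hb, hab.ne, ?_⟩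
    rw [pairCode_mod hcσ, min_eq_left hab.le, max_eq_right hab.le]
end

section
/- Let B be the Boolean algebra generated freely by generators {x_η : η ∈ T} subject to a set of relations of the form x_{τ₁} ⊓ x_{τ₂} ⊓ (x_{F₀(τ₁,τ₂)} ⇔ x_{F₁(τ₁,τ₂)}) = 0, where F₀, F₁ are partial functions on pairs from T. Then for a Boolean term t and η₀,…,η_{n-1} ∈ T, the element t(x_{η₀},…,x_{η_{n-1}}) is nonzero in B if and only if there is a function f : T → {0,1} such that t(f(η₀),…,f(η_{n-1})) = 1 in the two-element Boolean algebra and for every relation pair (τ₁,τ₂) with f(τ₁) = f(τ₂) = 1 one has f(F₀(τ₁,τ₂)) ≠ f(F₁(τ₁,τ₂)). -/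
/-- Boolean terms in `n` variables. -/
inductive BTerm (n : ℕ) where
  | var : Fin n → BTerm n
  | bot : BTerm n
  | top : BTerm n
  | not : BTerm n → BTerm n
  | and : BTerm n → BTerm n → BTerm n
  | or : BTerm n → BTerm n → BTerm n

/-- Evaluation of a Boolean term in an arbitrary Boolean algebra. -/
def BTerm.eval {n : ℕ} {β : Type*} [BooleanAlgebra β] (v : Fin n → β) : BTerm n → β
  | .var i => v i
  | .bot => ⊥
  | .top => ⊤
  | .not t => (t.eval v)ᶜ
  | .and t s => t.eval v ⊓ s.eval v
  | .or t s => t.eval v ⊔ s.eval v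

lemma BTerm.eval_map {n : ℕ} {β γ : Type*} [BooleanAlgebra β] [BooleanAlgebra γ]
    (φ : BoundedLatticeHom β γ) (v : Fin n → β) (t : BTerm n) :
    φ (t.eval v) = t.eval (fun i => φ (v i)) := by
  induction t with
  | var i => rfl
  | bot => exact map_bot φ
  | top => exact map_top φ
  | not t ih => simp [BTerm.eval, map_compl', ih]
  | and t s iht ihs => simp [BTerm.eval, map_inf, iht, ihs]
  | or t s iht ihs => simp [BTerm.eval, map_sup, iht, ihs]

open Order in
lemma exists_bool_hom {B : Type} [BooleanAlgebra B] {b : B} (hb : b ≠ ⊥) :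
    ∃ φ : BoundedLatticeHom B Bool, φ b = ⊤ := by
  classical
  have hdisj : Disjoint ((PFilter.principal b : PFilter B) : Set B)
      ((Ideal.principal (⊥ : B) : Ideal B) : Set B) := by
    rw [Set.disjoint_left]
    rintro a ha hb'
    have h1 : b ≤ a := ha
    have h2 : a ≤ ⊥ := hb'
    exact hb (le_bot_iff.mp (h1.trans h2))
  obtain ⟨J, hJprime, _, hJdisj⟩ :=
    DistribLattice.prime_ideal_of_disjoint_filter_ideal hdisj
  have hbJ : b ∉ J := fun h =>
    Set.disjoint_left.mp hJdisj (PFilter.mem_principal.mpr le_rfl) h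
  have hbot : (⊥ : B) ∈ J := J.bot_mem
  have htop : (⊤ : B) ∉ J := hJprime.toIsProper.top_notMem
  have hinf : ∀ a c : B, a ⊓ c ∈ J ↔ a ∈ J ∨ c ∈ J := by
    intro a c
    constructor
    · exact hJprime.mem_or_mem
    · rintro (h | h)
      · exact J.lower inf_le_left h
      · exact J.lower inf_le_right h
  have hsup : ∀ a c : B, a ⊔ c ∈ J ↔ a ∈ J ∧ c ∈ J := by
    intro a c
    constructor
    · intro h; exact ⟨J.lower le_sup_left h, J.lower le_sup_right h⟩
    · rintro ⟨h1, h2⟩; exact J.sup_mem h1 h2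
  refine ⟨⟨⟨⟨fun a => if a ∈ J then false else true, ?_⟩, ?_⟩, ?_, ?_⟩, ?_⟩
  · intro a c
    by_cases ha : a ∈ J <;> by_cases hc : c ∈ J
    · simp [ha, hc, (hsup a c).mpr ⟨ha, hc⟩]
    · have h : a ⊔ c ∉ J := fun h => hc ((hsup a c).mp h).2
      simp [ha, hc, h]
    · have h : a ⊔ c ∉ J := fun h => ha ((hsup a c).mp h).1
      simp [ha, hc, h]
    · have h : a ⊔ c ∉ J := fun h => ha ((hsup a c).mp h).1
      simp [ha, hc, h]
  · intro a c
    by_cases ha : a ∈ J <;> by_cases hc : c ∈ J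
    · simp [ha, hc, (hinf a c).mpr (Or.inl ha)]
    · simp [ha, hc, (hinf a c).mpr (Or.inl ha)]
    · simp [ha, hc, (hinf a c).mpr (Or.inr hc)]
    · have h : a ⊓ c ∉ J := fun h => ((hinf a c).mp h).elim ha hc
      simp [ha, hc, h]
  · simp [htop]
  · simp [hbot]
  · simp [hbJ]

/-- Let `B` be the Boolean algebra presented by generators `x η` (η ∈ T) subject to the
relations `x τ₁ ⊓ x τ₂ ⊓ (x (F₀ p) △ x (F₁ p))ᶜ = ⊥` for pairs `p = (τ₁,τ₂)` in the
domain `D`.  Then a term `t(x_{η₀},…,x_{η_{n-1}})` is nonzero in `B` iff there is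
`f : T → Bool` with `t(f(η₀),…,f(η_{n-1})) = 1` in the two-element algebra, such that
for every relation pair with `f τ₁ = f τ₂ = 1` one has `f (F₀ p) ≠ f (F₁ p)`. -/
theorem presented_algebra_nonzero_iff (T : Type) (D : Set (T × T))
    (Dsymm : ∀ p ∈ D, (p.2, p.1) ∈ D)
    (F₀ F₁ : T × T → T)
    (F₀symm : ∀ τ₁ τ₂, F₀ (τ₁, τ₂) = F₀ (τ₂, τ₁))
    (F₁symm : ∀ τ₁ τ₂, F₁ (τ₁, τ₂) = F₁ (τ₂, τ₁))
    (B : Type) [BooleanAlgebra B] (x : T → B)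
    (hrel : ∀ p ∈ D, x p.1 ⊓ x p.2 ⊓ (symmDiff (x (F₀ p)) (x (F₁ p)))ᶜ = ⊥)
    (hgen : ∀ b : B, ∃ (n : ℕ) (t : BTerm n) (η : Fin n → T), t.eval (x ∘ η) = b)
    (huniv : ∀ (C : Type) [BooleanAlgebra C] (g : T → C),
      (∀ p ∈ D, g p.1 ⊓ g p.2 ⊓ (symmDiff (g (F₀ p)) (g (F₁ p)))ᶜ = ⊥) →
      ∃ φ : BoundedLatticeHom B C, ∀ η, φ (x η) = g η) :
    ∀ (n : ℕ) (t : BTerm n) (η : Fin n → T),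
      t.eval (x ∘ η) ≠ ⊥ ↔
        ∃ f : T → Bool, t.eval (fun i => f (η i)) = ⊤ ∧
          ∀ p ∈ D, f p.1 = true → f p.2 = true → f (F₀ p) ≠ f (F₁ p) := by
  intro n t η
  constructor
  · intro hne
    obtain ⟨φ, hφ⟩ := exists_bool_hom hne
    refine ⟨fun τ => φ (x τ), ?_, ?_⟩
    · have h := BTerm.eval_map φ (x ∘ η) t
      rw [hφ] at h
      exact h.symm
    · intro p hp h1 h2 heq
      simp only at h1 h2 heq
      have h := congrArg φ (hrel p hp)
      rw [map_inf, map_inf, map_compl', map_symmDiff', map_bot] at h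
      rw [h1, h2, heq] at h
      simp [symmDiff_self] at h
  · rintro ⟨f, hf, hrelf⟩
    have hg : ∀ p ∈ D, f p.1 ⊓ f p.2 ⊓ (symmDiff (f (F₀ p)) (f (F₁ p)))ᶜ = ⊥ := by
      intro p hp
      cases h1 : f p.1 <;> cases h2 : f p.2
      · simp
      · simp
      · simp
      · have hne := hrelf p hp h1 h2
        cases hf0 : f (F₀ p) <;> cases hf1 : f (F₁ p)
        · exact absurd (hf0.trans hf1.symm) hne
        · decide
        · decide
        · exact absurd (hf0.trans hf1.symm) hne
    obtain ⟨φ, hφ⟩ := huniv Bool (fun τ => f τ) hg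
    intro hbot
    have h := BTerm.eval_map φ (x ∘ η) t
    rw [hbot, map_bot] at h
    have heq : (fun i => φ ((x ∘ η) i)) = fun i => f (η i) :=
      funext fun i => hφ (η i)
    rw [heq, hf] at h
    exact absurd h.symm (by decide)
end

section
/- With B as the quotient of the free Boolean algebra on generators {x_η : η ∈ T} by relations x_{τ₁} ⊓ x_{τ₂} ⊓ −(x_{F₀(τ₁,τ₂)} △ x_{F₁(τ₁,τ₂)}) = 0: for any two distinct elements η ≠ ν of T, the element x_η \ x_ν is nonzero in B; in particular x_η ≠ x_ν. -/
/-- In the Boolean algebra presented by generators `x η` (η ∈ T) and relations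
`x τ₁ ⊓ x τ₂ ⊓ (x (F₀ p) △ x (F₁ p))ᶜ = ⊥`, where each relation pair consists of two
distinct elements and the values of `F₀, F₁` are distinct from each other and from the
pair, any two distinct generators satisfy `x η \ x ν ≠ ⊥`; in particular `x η ≠ x ν`. -/
theorem presented_algebra_generators_distinct (T : Type) (D : Set (T × T))
    (Dsymm : ∀ p ∈ D, (p.2, p.1) ∈ D)
    (F₀ F₁ : T × T → T)
    (F₀symm : ∀ τ₁ τ₂, F₀ (τ₁, τ₂) = F₀ (τ₂, τ₁))
    (F₁symm : ∀ τ₁ τ₂, F₁ (τ₁, τ₂) = F₁ (τ₂, τ₁))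
    (hD : ∀ p ∈ D, p.1 ≠ p.2)
    (hF : ∀ p ∈ D, F₀ p ≠ p.1 ∧ F₀ p ≠ p.2 ∧ F₁ p ≠ p.1 ∧ F₁ p ≠ p.2 ∧ F₀ p ≠ F₁ p)
    (B : Type) [BooleanAlgebra B] (x : T → B)
    (hrel : ∀ p ∈ D, x p.1 ⊓ x p.2 ⊓ (symmDiff (x (F₀ p)) (x (F₁ p)))ᶜ = ⊥)
    (huniv : ∀ (C : Type) [BooleanAlgebra C] (g : T → C),
      (∀ p ∈ D, g p.1 ⊓ g p.2 ⊓ (symmDiff (g (F₀ p)) (g (F₁ p)))ᶜ = ⊥) →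
      ∃ φ : BoundedLatticeHom B C, ∀ η, φ (x η) = g η) :
    ∀ η ν : T, η ≠ ν → x η \ x ν ≠ ⊥ ∧ x η ≠ x ν := by
  intro η ν hne
  have hsd : x η \ x ν ≠ ⊥ := by
    intro h
    have hle : x η ≤ x ν := sdiff_eq_bot_iff.mp h
    have hrelP : ∀ p ∈ D, ((fun τ => τ = η) p.1 ⊓ (fun τ => τ = η) p.2 ⊓
        (symmDiff ((fun τ => τ = η) (F₀ p)) ((fun τ => τ = η) (F₁ p)))ᶜ : Prop) = ⊥ := by
      intro p hp
      have := hD p hp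
      show _ = False
      simp only [inf_Prop_eq, eq_iff_iff, iff_false]
      rintro ⟨⟨h1, h2⟩, -⟩
      exact this (h1.trans h2.symm)
    obtain ⟨φ, hφ⟩ := huniv Prop (fun τ => τ = η) hrelP
    have hmono : φ (x η) ≤ φ (x ν) := OrderHomClass.mono φ hle
    rw [hφ, hφ] at hmono
    exact hne (hmono rfl).symm
  exact ⟨hsd, fun h => hsd (by rw [h, sdiff_self])⟩
end

section
/- An element a of a Boolean algebra B is nonzero if and only if there exists a homomorphism h : B → {0,1} (the two-element Boolean algebra) with h(a) = 1. -/
open Order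

/-- An element of a Boolean algebra is nonzero iff some homomorphism to the two-element
Boolean algebra sends it to `1`. -/
theorem nonzero_iff_exists_hom_to_two (B : Type*) [BooleanAlgebra B] (a : B) :
    a ≠ ⊥ ↔ ∃ φ : BoundedLatticeHom B Bool, φ a = ⊤ := by
  classical
  constructor
  · intro ha
    obtain ⟨J, hJprime, -, hdisj⟩ :=
      DistribLattice.prime_ideal_of_disjoint_filter_ideal
        (F := PFilter.principal a) (I := Ideal.principal ⊥)
        (by
          rw [Set.disjoint_left]
          rintro x hx hx'
          have h1 : a ≤ x := by simpa using hx
          have h2 : x ≤ ⊥ := Ideal.mem_principal.mp hx'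
          exact ha (le_bot_iff.mp (h1.trans h2)))
    have haJ : a ∉ J := by
      have : a ∈ (PFilter.principal a : Set B) := by simp
      exact fun h => Set.disjoint_left.mp hdisj this h
    have hproper : Ideal.IsProper J := hJprime.toIsProper
    refine ⟨⟨⟨⟨fun x => decide (x ∉ J), ?_⟩, ?_⟩, ?_, ?_⟩, ?_⟩
    · intro x y
      by_cases hx : x ∈ J
      · by_cases hy : y ∈ J
        · simp [hx, hy, J.sup_mem hx hy]
        · have : x ⊔ y ∉ J := fun h => hy (J.lower le_sup_right h)
          simp [hx, hy, this]
      · have : x ⊔ y ∉ J := fun h => hx (J.lower le_sup_left h)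
        simp [hx, this]
    · intro x y
      simp only [decide_eq_true_eq]
      by_cases hx : x ∈ J
      · have : x ⊓ y ∈ J := J.lower inf_le_left hx
        simp [hx, this]
      · by_cases hy : y ∈ J
        · have : x ⊓ y ∈ J := J.lower inf_le_right hy
          simp [hx, hy, this]
        · have : x ⊓ y ∉ J := fun h => (hJprime.mem_or_mem h).elim hx hy
          simp [hx, hy, this]
    · simpa using Ideal.IsProper.top_notMem (I := J) hproper
    · simp [Ideal.bot_mem]
    · simpa using haJ
  · rintro ⟨φ, hφ⟩ rfl
    rw [map_bot] at hφ
    exact absurd hφ (by simp)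
end

section
/- For an infinite cardinal μ, the topological density of the product space {0,1}^{2^μ} is at most μ; equivalently, the free Boolean algebra on 2^μ generators has a family of at most μ ultrafilters whose union contains every nonzero element. -/
open Cardinal

/-- Hewitt–Marczewski–Pondiczery instance: the product space `{0,1}^(2^μ)` has a dense
subset of cardinality at most μ, for any infinite cardinal μ. -/
theorem density_cantor_cube_le (μ : Cardinal.{0}) (hμ : ℵ₀ ≤ μ)
    (ι : Type) (hι : #ι = 2 ^ μ) :
    ∃ s : Set (ι → Bool), #s ≤ μ ∧ Dense s := by
  classical
  set T : Type := μ.out with hT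
  have hTcard : #T = μ := mk_out μ
  have hTinf : Infinite T := Cardinal.infinite_iff.mpr (hTcard ▸ hμ)
  have hset : #ι = #(Set T) := by rw [hι, mk_set, hTcard]
  obtain ⟨e⟩ := Cardinal.eq.mp hset
  -- the approximating functions
  let g : Finset T × Finset (Finset T) → (ι → Bool) :=
    fun p i => decide (∃ a ∈ p.2, (e i ∩ ↑p.1 : Set T) = ↑a)
  refine ⟨Set.range g, ?_, ?_⟩
  · calc #(Set.range g) ≤ #(Finset T × Finset (Finset T)) := mk_range_le
    _ = μ := by
      simp only [mk_prod, Cardinal.lift_id, mk_finset_of_infinite, hTcard]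
      exact mul_eq_self hμ
  · rw [(isTopologicalBasis_pi (fun _ : ι => TopologicalSpace.isTopologicalBasis_opens)).dense_iff]
    rintro o ⟨U, I, -, rfl⟩ ⟨x, hx⟩
    -- choose separating points
    let F : Finset T := (I ×ˢ I).biUnion (fun p =>
      if h : (symmDiff (e p.1) (e p.2) : Set T).Nonempty then {h.some} else ∅)
    have hsep : ∀ i ∈ I, ∀ j ∈ I, i ≠ j → (e i ∩ ↑F : Set T) ≠ (e j ∩ ↑F : Set T) := by
      intro i hi j hj hij
      have hne : (symmDiff (e i) (e j) : Set T).Nonempty := by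
        rw [Set.nonempty_iff_ne_empty]
        intro h
        exact hij (e.injective (symmDiff_eq_bot.mp h))
      have htF : hne.some ∈ F := by
        refine Finset.mem_biUnion.mpr ⟨(i, j), Finset.mem_product.mpr ⟨hi, hj⟩, ?_⟩
        simp [hne]
      have := hne.some_mem
      rw [Set.mem_symmDiff] at this
      rcases this with ⟨h1, h2⟩ | ⟨h1, h2⟩
      · intro h
        exact h2 (h ▸ Set.mem_inter h1 htF).1
      · intro h
        exact h2 (h.symm ▸ Set.mem_inter h1 htF).1
    let A : Finset (Finset T) := (I.filter (fun i => x i = true)).image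
      (fun i => F.filter (fun t => t ∈ e i))
    have hcoe : ∀ i : ι, (↑(F.filter (fun t => t ∈ e i)) : Set T) = e i ∩ ↑F := by
      intro i
      ext t
      simp [Finset.mem_filter, and_comm]
    refine ⟨g (F, A), ⟨?_, Set.mem_range_self _⟩⟩
    intro i hi
    have hxi := hx i hi
    have : g (F, A) i = x i := by
      cases hxv : x i
      · simp only [g, decide_eq_false_iff_not]
        rintro ⟨a, ha, hia⟩
        obtain ⟨j, hj, rfl⟩ := Finset.mem_image.mp ha
        rw [Finset.mem_filter] at hj
        have : (e i ∩ ↑F : Set T) = (e j ∩ ↑F : Set T) := by rw [hia, hcoe]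
        have hij : i ≠ j := by rintro rfl; rw [hxv] at hj; simp at hj
        exact hsep i hi j hj.1 hij this
      · simp only [g, decide_eq_true_eq]
        exact ⟨F.filter (fun t => t ∈ e i),
          Finset.mem_image.mpr ⟨i, Finset.mem_filter.mpr ⟨hi, hxv⟩, rfl⟩, (hcoe i).symm⟩
    rwa [this]
end
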